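/- Let T be a tree rooted at a node r of degree 1, with maximum degree 3. In any execution of the greedy bottom-up triplet-forming procedure (pairing two orange siblings with their parent, or an orange node with its parent and grandparent, recoloring the top node orange, processing levels from deepest to level 2, and finally adding one triplet containing the root if the root is uncovered), every node of T ends up covered by some triplet. -/
import Mathlib


open scoped Classical

namespace ArtGallery

noncomputable section

/-- Node colors used by the greedy bottom-up triplet-forming procedure. -/
inductive TColor
  | red | orange | green
deriving DecidableEq

/-- A finite rooted tree of maximum degree 3 whose root has degree 1, together with its
parent and depth (level) functions. -/
structure RootedTree (V : Type) [Fintype V] where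
  G : SimpleGraph V
  isTree : G.IsTree
  root : V
  parent : V → V
  parent_root : parent root = root
  parent_adj : ∀ v, v ≠ root → G.Adj v (parent v)
  depth : V → ℕ
  depth_root : depth root = 0
  depth_parent : ∀ v, v ≠ root → depth (parent v) + 1 = depth v
  maxDeg : ∀ v, (G.neighborSet v).ncard ≤ 3
  root_deg : (G.neighborSet root).ncard = 1

/-- A state of the procedure: a coloring of the nodes and the set of triplets formed so far. -/
structure TState (V : Type) where
  color : V → TColor
  trips : Set (Set V)

variable {V : Type} [Fintype V]

/-- The initial state: all leaves orange, all other nodes red, no triplets formed. -/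
def initState (T : RootedTree V) : TState V :=
  ⟨fun v => if v ≠ T.root ∧ (T.G.neighborSet v).ncard = 1 then TColor.orange else TColor.red, ∅⟩

/-- One step of the greedy bottom-up triplet-forming procedure.  Orange nodes are processed
from the deepest level upwards (down to level 2): either two orange siblings are merged with
their parent (which becomes orange, the siblings green), or a lone orange node is merged with
its parent and grandparent (the grandparent becomes orange, the other two green). -/
inductive TStep (T : RootedTree V) : TState V → TState V → Prop
  | pair (s : TState V) (v v' : V)
      (hv : s.color v = TColor.orange) (hv' : s.color v' = TColor.orange)
      (hne : v ≠ v') (hp : T.parent v = T.parent v')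
      (hdeep : ∀ w, s.color w = TColor.orange → T.depth w ≤ T.depth v)
      (hd : 2 ≤ T.depth v) :
      TStep T s ⟨fun w => if w = v ∨ w = v' then TColor.green
                  else if w = T.parent v then TColor.orange else s.color w,
        insert {v, v', T.parent v} s.trips⟩
  | chain (s : TState V) (v : V)
      (hv : s.color v = TColor.orange)
      (hsolo : ∀ v', v' ≠ v → T.parent v' = T.parent v → s.color v' ≠ TColor.orange)
      (hdeep : ∀ w, s.color w = TColor.orange → T.depth w ≤ T.depth v)
      (hd : 2 ≤ T.depth v) :
      TStep T s ⟨fun w => if w = v ∨ w = T.parent v then TColor.green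
                  else if w = T.parent (T.parent v) then TColor.orange else s.color w,
        insert {v, T.parent v, T.parent (T.parent v)} s.trips⟩

/-- The procedure has finished its main loop: no orange node at level `≥ 2` remains. -/
def Terminal (T : RootedTree V) (s : TState V) : Prop :=
  ∀ v, s.color v = TColor.orange → T.depth v < 2

/-- The final family of triplets: if the root is already covered, the triplets formed so far;
otherwise one additional triplet consisting of the root, its child and a grandchild. -/
def FinalTrips (T : RootedTree V) (s : TState V) (F : Set (Set V)) : Prop :=
  ((∃ t ∈ s.trips, T.root ∈ t) ∧ F = s.trips) ∨
  ((∀ t ∈ s.trips, T.root ∉ t) ∧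
    ∃ c g : V, c ≠ T.root ∧ T.parent c = T.root ∧ g ≠ c ∧ T.parent g = c ∧
      F = insert {T.root, c, g} s.trips)

/-! ### Auxiliary lemmas -/

namespace RootedTree

variable (T : RootedTree V)

lemma depth_eq_zero_iff {v : V} : T.depth v = 0 ↔ v = T.root := by
  constructor
  · intro h
    by_contra hne
    have := T.depth_parent v hne
    omega
  · rintro rfl; exact T.depth_root

lemma ne_root_of_depth {v : V} (h : 1 ≤ T.depth v) : v ≠ T.root := by
  intro heq; rw [heq, T.depth_root] at h; omega

lemma depth_parent_le (v : V) : T.depth (T.parent v) ≤ T.depth v := by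
  by_cases h : v = T.root
  · subst h; rw [T.parent_root]
  · have := T.depth_parent v h; omega

lemma depth_iterate_le (n : ℕ) (v : V) : T.depth (T.parent^[n] v) ≤ T.depth v := by
  induction n generalizing v with
  | zero => simp
  | succ m ih =>
    rw [Function.iterate_succ_apply]
    exact le_trans (ih (T.parent v)) (T.depth_parent_le v)

/-- every edge of the tree is a (child, parent) edge -/
lemma exists_iterate_root (u : V) : ∃ n, T.parent^[n] u = T.root := by
  generalize hd : T.depth u = d
  induction d using Nat.strong_induction_on generalizing u with
  | _ d ih =>
    subst hd
    by_cases hur : u = T.root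
    · exact ⟨0, hur⟩
    · have hdp := T.depth_parent u hur
      obtain ⟨m, hm⟩ := ih (T.depth (T.parent u)) (by omega) (T.parent u) rfl
      exact ⟨m + 1, by rw [Function.iterate_succ_apply, hm]⟩

lemma edge_form {x w : V} (h : T.G.Adj x w) : T.parent x = w ∨ T.parent w = x := by
  classical
  set f : V → Sym2 V := fun v => s(v, T.parent v) with hf
  set A : Finset V := Finset.univ.erase T.root with hA
  have hinj : Set.InjOn f (A : Set V) := by
    intro a ha b hb hab
    have ha' : a ≠ T.root := (Finset.mem_erase.mp ha).1
    have hb' : b ≠ T.root := (Finset.mem_erase.mp hb).1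
    simp only [hf, Sym2.eq_iff] at hab
    rcases hab with ⟨h1, _⟩ | ⟨h1, h2⟩
    · exact h1
    · have da := T.depth_parent a ha'
      have db := T.depth_parent b hb'
      rw [h2] at da; rw [← h1] at db; omega
  have hsub : A.image f ⊆ T.G.edgeFinset := by
    intro e he
    simp only [Finset.mem_image] at he
    obtain ⟨v, hv, rfl⟩ := he
    have hvne : v ≠ T.root := (Finset.mem_erase.mp hv).1
    rw [SimpleGraph.mem_edgeFinset]
    exact T.parent_adj v hvne
  have hcardA : A.card = Fintype.card V - 1 := by
    rw [hA, Finset.card_erase_of_mem (Finset.mem_univ _), Finset.card_univ]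
  have hcardE : T.G.edgeFinset.card + 1 = Fintype.card V := T.isTree.card_edgeFinset
  have heq : A.image f = T.G.edgeFinset := by
    apply Finset.eq_of_subset_of_card_le hsub
    rw [Finset.card_image_of_injOn hinj, hcardA]
    omega
  have hmem : s(x, w) ∈ T.G.edgeFinset := by
    rw [SimpleGraph.mem_edgeFinset]; exact h
  rw [← heq, Finset.mem_image] at hmem
  obtain ⟨v, hv, hfv⟩ := hmem
  simp only [hf, Sym2.eq_iff] at hfv
  rcases hfv with ⟨rfl, h2⟩ | ⟨rfl, h2⟩
  · exact Or.inl h2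
  · exact Or.inr h2

/-- a non-root non-leaf node has a child -/
lemma exists_child {w : V} (hw : w ≠ T.root) (hleaf : (T.G.neighborSet w).ncard ≠ 1) :
    ∃ x, x ≠ T.root ∧ T.parent x = w := by
  have hpmem : T.parent w ∈ T.G.neighborSet w := T.parent_adj w hw
  have hx : ∃ x ∈ T.G.neighborSet w, x ≠ T.parent w := by
    by_contra hcon
    push_neg at hcon
    apply hleaf
    have : T.G.neighborSet w = {T.parent w} := by
      apply Set.eq_singleton_iff_unique_mem.mpr
      exact ⟨hpmem, hcon⟩
    rw [this, Set.ncard_singleton]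
  obtain ⟨x, hxmem, hxne⟩ := hx
  have hadj : T.G.Adj x w := (SimpleGraph.mem_neighborSet _ _ _ |>.mp hxmem).symm
  rcases T.edge_form hadj with h1 | h1
  · refine ⟨x, ?_, h1⟩
    intro hxr
    rw [hxr, T.parent_root] at h1
    exact hw h1.symm
  · exact absurd h1.symm hxne

/-- every node has an orange (leaf) descendant in the initial state -/
lemma exists_orange_desc_init (hdepth : ∃ v, 2 ≤ T.depth v) (u : V) :
    ∃ w, (initState T).color w = TColor.orange ∧ ∃ n, T.parent^[n] w = u := by
  classical
  set S : Finset V := Finset.univ.filter (fun w => ∃ n, T.parent^[n] w = u) with hS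
  have hmemS : ∀ w, w ∈ S ↔ ∃ n, T.parent^[n] w = u := by
    intro w; simp [hS]
  have hne : S.Nonempty := ⟨u, (hmemS u).mpr ⟨0, rfl⟩⟩
  obtain ⟨w, hwS, hwmax⟩ := S.exists_max_image T.depth hne
  obtain ⟨n, hn⟩ := (hmemS w).mp hwS
  have hwroot : w ≠ T.root := by
    by_cases hu : u = T.root
    · subst hu
      obtain ⟨v, hv⟩ := hdepth
      have hvS : v ∈ S := by
        rw [hmemS]
        exact T.exists_iterate_root v
      have := hwmax v hvS
      apply T.ne_root_of_depth; omega
    · have huS : u ∈ S := (hmemS u).mpr ⟨0, rfl⟩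
      have h1 := hwmax u huS
      have : 1 ≤ T.depth u := by
        rcases Nat.eq_zero_or_pos (T.depth u) with h | h
        · exact absurd ((T.depth_eq_zero_iff).mp h) hu
        · exact h
      apply T.ne_root_of_depth; omega
  have hleaf : (T.G.neighborSet w).ncard = 1 := by
    by_contra hcon
    obtain ⟨x, hxr, hpx⟩ := T.exists_child hwroot hcon
    have hxS : x ∈ S := by
      rw [hmemS]
      exact ⟨n + 1, by rw [Function.iterate_succ_apply, hpx, hn]⟩
    have h1 := hwmax x hxS
    have h2 := T.depth_parent x hxr
    rw [hpx] at h2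
    omega
  refine ⟨w, ?_, n, hn⟩
  simp only [initState]
  rw [if_pos ⟨hwroot, hleaf⟩]

/-- the root has a unique child -/
lemma root_child_unique {x y : V} (hx : x ≠ T.root) (hpx : T.parent x = T.root)
    (hy : y ≠ T.root) (hpy : T.parent y = T.root) : x = y := by
  obtain ⟨a, ha⟩ := Set.ncard_eq_one.mp T.root_deg
  have hx' : x ∈ T.G.neighborSet T.root := by
    have := T.parent_adj x hx; rw [hpx] at this; exact this.symm
  have hy' : y ∈ T.G.neighborSet T.root := by
    have := T.parent_adj y hy; rw [hpy] at this; exact this.symm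
  rw [ha, Set.mem_singleton_iff] at hx' hy'
  rw [hx', hy']

end RootedTree

/-- The key invariant maintained by the procedure. -/
def Inv (T : RootedTree V) (s : TState V) : Prop :=
  (∀ u, (¬ ∃ t ∈ s.trips, u ∈ t) →
      ∃ w, s.color w = TColor.orange ∧ ∃ n, T.parent^[n] w = u) ∧
  (∀ t ∈ s.trips, T.root ∈ t → ∃ x ∈ t, x ≠ T.root ∧ T.parent x = T.root)

lemma inv_init (T : RootedTree V) (hdepth : ∃ v, 2 ≤ T.depth v) :
    Inv T (initState T) := by
  constructor
  · intro u _
    exact T.exists_orange_desc_init hdepth u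
  · intro t ht
    simp [initState] at ht

lemma inv_step (T : RootedTree V) {s s' : TState V} (hstep : TStep T s s')
    (hinv : Inv T s) : Inv T s' := by
  obtain ⟨hA, hB⟩ := hinv
  cases hstep with
  | pair v v' hv hv' hne hp hdeep hd =>
    have hvr : v ≠ T.root := T.ne_root_of_depth (by omega)
    have hv'r : v' ≠ T.root := by
      intro heq
      rw [heq, T.parent_root] at hp
      have := T.depth_parent v hvr
      rw [hp, T.depth_root] at this
      omega
    have hdv := T.depth_parent v hvr
    have hdv' := T.depth_parent v' hv'r
    rw [← hp] at hdv'
    have hpv : T.parent v ≠ v := by intro h; rw [h] at hdv; omega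
    have hpv' : T.parent v ≠ v' := by intro h; rw [h] at hdv'; omega
    have hroot_nt : T.root ∉ ({v, v', T.parent v} : Set V) := by
      intro h
      simp only [Set.mem_insert_iff, Set.mem_singleton_iff] at h
      rcases h with h | h | h
      · exact hvr h.symm
      · exact hv'r h.symm
      · rw [← h, T.depth_root] at hdv; omega
    constructor
    · intro u hu
      have hunt : u ∉ ({v, v', T.parent v} : Set V) := fun h =>
        hu ⟨_, Set.mem_insert _ _, h⟩
      have huold : ¬ ∃ t ∈ s.trips, u ∈ t := by
        rintro ⟨t, ht, hut⟩; exact hu ⟨t, Set.mem_insert_of_mem _ ht, hut⟩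
      obtain ⟨w, hw, n, hn⟩ := hA u huold
      simp only [Set.mem_insert_iff, Set.mem_singleton_iff, not_or] at hunt
      obtain ⟨huv, huv', hupv⟩ := hunt
      by_cases hcase : w = v ∨ w = v'
      · refine ⟨T.parent v, ?_, ?_⟩
        · simp [hpv, hpv']
        · cases n with
          | zero =>
            simp only [Function.iterate_zero_apply] at hn
            rcases hcase with rfl | rfl
            · exact absurd hn.symm huv
            · exact absurd hn.symm huv'
          | succ m =>
            refine ⟨m, ?_⟩
            rcases hcase with rfl | rfl
            · rw [Function.iterate_succ_apply] at hn; exact hn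
            · rw [Function.iterate_succ_apply, ← hp] at hn; exact hn
      · refine ⟨w, ?_, n, hn⟩
        push_neg at hcase
        simp only [if_neg (show ¬(w = v ∨ w = v') from by push_neg; exact hcase)]
        by_cases hwp : w = T.parent v
        · rw [if_pos hwp]
        · rw [if_neg hwp]; exact hw
    · intro t ht hroot
      simp only [Set.mem_insert_iff] at ht
      rcases ht with rfl | ht
      · exact absurd hroot hroot_nt
      · exact hB t ht hroot
  | chain v hv hsolo hdeep hd =>
    have hvr : v ≠ T.root := T.ne_root_of_depth (by omega)
    have hdv := T.depth_parent v hvr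
    have hpvr : T.parent v ≠ T.root := by
      intro h; rw [h, T.depth_root] at hdv; omega
    have hdpv := T.depth_parent _ hpvr
    have h1 : v ≠ T.parent v := by intro h; rw [← h] at hdv; omega
    have h2 : T.parent (T.parent v) ≠ v := by intro h; rw [h] at hdpv; omega
    have h3 : T.parent (T.parent v) ≠ T.parent v := by intro h; rw [h] at hdpv; omega
    constructor
    · intro u hu
      have hunt : u ∉ ({v, T.parent v, T.parent (T.parent v)} : Set V) := fun h =>
        hu ⟨_, Set.mem_insert _ _, h⟩
      have huold : ¬ ∃ t ∈ s.trips, u ∈ t := by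
        rintro ⟨t, ht, hut⟩; exact hu ⟨t, Set.mem_insert_of_mem _ ht, hut⟩
      obtain ⟨w, hw, n, hn⟩ := hA u huold
      simp only [Set.mem_insert_iff, Set.mem_singleton_iff, not_or] at hunt
      obtain ⟨huv, hupv, huppv⟩ := hunt
      have hgporange : (fun w => if w = v ∨ w = T.parent v then TColor.green
          else if w = T.parent (T.parent v) then TColor.orange else s.color w)
          (T.parent (T.parent v)) = TColor.orange := by
        simp [h2, h3]
      by_cases hcase : w = v ∨ w = T.parent v
      · refine ⟨T.parent (T.parent v), hgporange, ?_⟩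
        rcases hcase with rfl | rfl
        · match n, hn with
          | 0, hn => exact absurd hn.symm huv
          | 1, hn => simp only [Function.iterate_one] at hn; exact absurd hn.symm hupv
          | (m+2), hn =>
            refine ⟨m, ?_⟩
            rw [Function.iterate_succ_apply, Function.iterate_succ_apply] at hn
            exact hn
        · match n, hn with
          | 0, hn => exact absurd hn.symm hupv
          | (m+1), hn =>
            refine ⟨m, ?_⟩
            rw [Function.iterate_succ_apply] at hn
            exact hn
      · refine ⟨w, ?_, n, hn⟩
        push_neg at hcase
        simp only [if_neg (show ¬(w = v ∨ w = T.parent v) from by push_neg; exact hcase)]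
        by_cases hwp : w = T.parent (T.parent v)
        · rw [if_pos hwp]
        · rw [if_neg hwp]; exact hw
    · intro t ht hroot
      simp only [Set.mem_insert_iff] at ht
      rcases ht with rfl | ht
      · simp only [Set.mem_insert_iff, Set.mem_singleton_iff] at hroot
        rcases hroot with h | h | h
        · exact absurd h.symm hvr
        · exact absurd h.symm hpvr
        · refine ⟨T.parent v, ?_, hpvr, h.symm⟩
          simp
      · exact hB t ht hroot

lemma inv_exec (T : RootedTree V) (hdepth : ∃ v, 2 ≤ T.depth v) {s : TState V}
    (hexec : Relation.ReflTransGen (TStep T) (initState T) s) : Inv T s := by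
  induction hexec with
  | refl => exact inv_init T hdepth
  | tail _ hstep ih => exact inv_step T hstep ih


/-- In any execution of the greedy bottom-up triplet-forming procedure on a
rooted tree of maximum degree 3 with degree-1 root and depth at least 2, every node of the
tree ends up covered by some triplet. -/
theorem greedy_triplets_cover (T : RootedTree V) (hdepth : ∃ v, 2 ≤ T.depth v)
    (s : TState V) (hexec : Relation.ReflTransGen (TStep T) (initState T) s)
    (hterm : Terminal T s) (F : Set (Set V)) (hF : FinalTrips T s F) :
    ∀ v : V, ∃ t ∈ F, v ∈ t := by
  intro u
  obtain ⟨hA, hB⟩ := inv_exec T hdepth hexec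
  by_cases hcov : ∃ t ∈ s.trips, u ∈ t
  · obtain ⟨t, ht, hut⟩ := hcov
    rcases hF with ⟨_, rfl⟩ | ⟨_, c, g, _, _, _, _, rfl⟩
    · exact ⟨t, ht, hut⟩
    · exact ⟨t, Set.mem_insert_of_mem _ ht, hut⟩
  · obtain ⟨w, hw, n, hn⟩ := hA u hcov
    have hdw : T.depth w < 2 := hterm w hw
    have hdu : T.depth u ≤ T.depth w := by
      rw [← hn]; exact T.depth_iterate_le n w
    rcases hF with ⟨⟨t, ht, hroot⟩, rfl⟩ | ⟨hnone, c, g, hc, hpc, hg, hpg, rfl⟩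
    · by_cases hur : u = T.root
      · exact absurd ⟨t, ht, hur ▸ hroot⟩ hcov
      · have hdu0 : T.depth u ≠ 0 := fun h => hur (T.depth_eq_zero_iff.mp h)
        have hdp := T.depth_parent u hur
        have hpu : T.parent u = T.root := T.depth_eq_zero_iff.mp (by omega)
        obtain ⟨x, hxt, hxr, hpx⟩ := hB t ht hroot
        have hux : u = x := T.root_child_unique hur hpu hxr hpx
        exact absurd ⟨t, ht, hux ▸ hxt⟩ hcov
    · by_cases hur : u = T.root
      · exact ⟨_, Set.mem_insert _ _, by simp [hur]⟩
      · have hdu0 : T.depth u ≠ 0 := fun h => hur (T.depth_eq_zero_iff.mp h)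
        have hdp := T.depth_parent u hur
        have hpu : T.parent u = T.root := T.depth_eq_zero_iff.mp (by omega)
        have huc : u = c := T.root_child_unique hur hpu hc hpc
        refine ⟨_, Set.mem_insert _ _, ?_⟩
        simp [huc]


end
end ArtGallery
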